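/- arXiv:2012.11953 — 4 statements merged into one kernel-verified Lean document; each statement's English description precedes it below -/
import Mathlib

section
/- Let m ≥ 1 and let X_1, …, X_m be independent exponential random variables with finite rates r_1, …, r_m > 0. Let r = r_1 + … + r_m and suppose r_i ≤ ε·r for all i, for some ε > 0. Let X_{(D)} denote the D-th smallest value among X_1, …, X_m. Then for every integer D with 1 ≤ D ≤ 1/(2ε) and every index i: P(X_i ≤ X_{(D)}) ≤ 2D·r_i/r. -/
/-!
Read the `X_j` as arrival times. The exponential density is `r_l` times the survival function
`t ↦ P(X_l ≥ t)`, so the probability that `l` arrives right after exactly the coordinates in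
`S` is `r_l · V(S)`, with `V(S)` independent of `l`. Summing over `l ∉ S` (ties are null)
gives `ρ(S) · V(S) ≤ P(the coordinates in S arrive first)`, where `ρ(S) = ∑_{l ∉ S} r_l`,
and `ρ(S) ≥ r / 2` once `|S| < D`. Hence
`P(i arrives right after S) ≤ (2 r_i / r) · P(S arrives first)`. Finally `X_i ≤ X_(D)` forces
fewer than `D` coordinates strictly below `X_i`, and for each size `k` the events
"`S` arrives first" with `|S| = k` are disjoint, so summing over `S` costs a factor `D`.
-/

open MeasureTheory ProbabilityTheory

namespace Paper

/-- The law of an exponential random variable with rate `r` (junk value for `r ≤ 0`,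
packaged so that the product measure below is defined). -/
noncomputable def expLaw (r : ℝ) : Measure ℝ :=
  if h : 0 < r then expMeasure r else Measure.dirac 0

instance expLaw.instIsProbabilityMeasure (r : ℝ) : IsProbabilityMeasure (expLaw r) := by
  unfold expLaw
  split
  · exact isProbabilityMeasure_expMeasure ‹0 < r›
  · exact Measure.dirac.isProbabilityMeasure

/-- `X_{(D)}`: the `D`-th smallest value of the family `ω`. -/
noncomputable def orderStat {m : ℕ} (D : ℕ) (ω : Fin m → ℝ) : ℝ :=
  sInf {x : ℝ | D ≤ Set.ncard {i | ω i ≤ x}}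

end Paper

open Paper

open Set Real

namespace MeasureTheory.Measure

variable {α : Type*} [MeasurableSpace α] {n : ℕ} (μ : Fin (n + 1) → Measure α)
  [∀ j, SigmaFinite (μ j)]

theorem pi_setOf_forall_succAbove_mem (l : Fin (n + 1)) (A : Fin n → α → Set α)
    (hA : ∀ j, MeasurableSet {p : α × α | p.2 ∈ A j p.1}) :
    Measure.pi μ {ω | ∀ j, ω (l.succAbove j) ∈ A j (ω l)} =
      ∫⁻ t, ∏ j, μ (l.succAbove j) (A j t) ∂μ l := by
  set s := {p : α × (Fin n → α) | ∀ j, p.2 j ∈ A j p.1}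
  have hs : MeasurableSet s := by
    simp only [s, ofPred_forall]
    exact .iInter fun j =>
      (hA j).preimage (measurable_fst.prodMk ((measurable_pi_apply j).comp measurable_snd))
  calc Measure.pi μ {ω | ∀ j, ω (l.succAbove j) ∈ A j (ω l)}
      = Measure.pi μ (MeasurableEquiv.piFinSuccAbove (fun _ => α) l ⁻¹' s) := rfl
    _ = ∫⁻ t, ∏ j, μ (l.succAbove j) (A j t) ∂μ l := by
      rw [(measurePreserving_piFinSuccAbove μ l).measure_preimage_equiv, prod_apply hs]
      congr with t
      rw [← pi_pi]
      congr 1 with y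
      simp [s]

theorem pi_eval_eq_eval_null {l l' : Fin (n + 1)} (h : l' ≠ l) [MeasurableEq α]
    [NullSingletonClass (μ l')] :
    Measure.pi μ {ω | ω l' = ω l} = 0 := by
  obtain ⟨j', rfl⟩ := Fin.exists_succAbove_eq h
  have hset : {ω : Fin (n + 1) → α | ω (l.succAbove j') = ω l} =
      {ω | ∀ j, ω (l.succAbove j) ∈ {x | j = j' → x = ω l}} := by
    ext ω; simp
  rw [hset, pi_setOf_forall_succAbove_mem μ l (fun j t => {x | j = j' → x = t})]
  · have hzero (t : α) : ∏ j, μ (l.succAbove j) {x | j = j' → x = t} = 0 :=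
      Finset.prod_eq_zero (Finset.mem_univ j') (by simp)
    simp [hzero]
  · intro j
    by_cases hj : j = j'
    · simpa [hj] using measurableSet_eq_fun measurable_snd measurable_fst
    · simp [hj]

end MeasureTheory.Measure

namespace Paper

section ExponentialLaw

variable {r : ℝ}

theorem expLaw_of_pos (hr : 0 < r) : expLaw r = expMeasure r := dif_pos hr

theorem nullSingletonClass_expLaw (hr : 0 < r) : NullSingletonClass (expLaw r) := by
  rw [expLaw_of_pos hr, expMeasure, gammaMeasure]
  infer_instance

theorem expLaw_Ici (hr : 0 < r) {t : ℝ} (ht : 0 ≤ t) :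
    expLaw r (Ici t) = ENNReal.ofReal (exp (-(r * t))) := by
  have := nullSingletonClass_expLaw hr
  have hexp : exp (-(r * t)) ≤ 1 := exp_le_one_iff.2 (by nlinarith)
  rw [← compl_Iio, prob_compl_eq_one_sub measurableSet_Iio, measure_congr Iio_ae_eq_Iic,
    ← ofReal_cdf, expLaw_of_pos hr, cdf_expMeasure_eq hr, if_pos ht,
    ENNReal.ofReal_sub _ (exp_pos _).le, ENNReal.ofReal_one,
    ENNReal.sub_sub_cancel ENNReal.one_ne_top (ENNReal.ofReal_le_one.2 hexp)]

theorem lintegral_expLaw (hr : 0 < r) (f : ℝ → ENNReal) :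
    ∫⁻ t, f t ∂expLaw r = ENNReal.ofReal r * ∫⁻ t in Ici 0, expLaw r (Ici t) * f t := by
  conv_lhs => rw [expLaw_of_pos hr, expMeasure, gammaMeasure,
    lintegral_withDensity_eq_lintegral_mul_non_measurable _
      (show Measurable (gammaPDF 1 r) from (measurable_gammaPDFReal 1 r).ennreal_ofReal)
      (.of_forall fun _ => ENNReal.ofReal_lt_top)]
  rw [← lintegral_const_mul' _ _ ENNReal.ofReal_ne_top, ← lintegral_indicator measurableSet_Ici]
  congr with t
  by_cases ht : 0 ≤ t
  · rw [indicator_of_mem (mem_Ici.2 ht), expLaw_Ici hr ht, ← mul_assoc,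
      ← ENNReal.ofReal_mul hr.le]
    simp [gammaPDF, gammaPDFReal, ht]
  · rw [indicator_of_notMem (by simpa using ht)]
    simp [gammaPDF, gammaPDFReal, ht]

end ExponentialLaw

section Events

open Finset

variable {ι : Type*}

def belowExactly (l : ι) (S : Finset ι) : Set (ι → ℝ) :=
  {ω | (∀ j ∈ S, ω j < ω l) ∧ ∀ j ∉ S, ω l ≤ ω j}

def leading (S : Finset ι) : Set (ι → ℝ) :=
  {ω | ∀ j ∈ S, ∀ l ∉ S, ω j < ω l}

theorem measurableSet_belowExactly [Countable ι] (l : ι) (S : Finset ι) :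
    MeasurableSet (belowExactly l S) := by
  simp only [belowExactly, ofPred_and, ofPred_forall]
  exact .inter
    (.iInter fun j => .iInter fun _ =>
      measurableSet_lt (measurable_pi_apply j) (measurable_pi_apply l))
    (.iInter fun j => .iInter fun _ =>
      measurableSet_le (measurable_pi_apply l) (measurable_pi_apply j))

theorem measurableSet_leading [Countable ι] (S : Finset ι) : MeasurableSet (leading S) := by
  simp only [leading, ofPred_forall]
  exact .iInter fun j => .iInter fun _ => .iInter fun l => .iInter fun _ =>
    measurableSet_lt (measurable_pi_apply j) (measurable_pi_apply l)

theorem belowExactly_subset_leading (l : ι) (S : Finset ι) :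
    belowExactly l S ⊆ leading S :=
  fun _ ⟨hlt, hle⟩ j hj l' hl' => (hlt j hj).trans_le (hle l' hl')

theorem belowExactly_inter_subset {l l' : ι} {S : Finset ι} (hl : l ∉ S) (hl' : l' ∉ S) :
    belowExactly l S ∩ belowExactly l' S ⊆ {ω | ω l' = ω l} :=
  fun _ ⟨⟨_, hle⟩, ⟨_, hle'⟩⟩ => (hle' l hl).antisymm (hle l' hl')

theorem disjoint_leading {S S' : Finset ι} (hcard : #S = #S') (hne : S ≠ S') :
    Disjoint (leading S) (leading S') := by
  obtain ⟨j, hjS, hjS'⟩ :=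
    Finset.not_subset.1 fun h => hne (eq_of_subset_of_card_le h hcard.ge)
  obtain ⟨l, hlS', hlS⟩ :=
    Finset.not_subset.1 fun h => hne (eq_of_subset_of_card_le h hcard.le).symm
  exact Set.disjoint_left.2 fun ω hω hω' => (hω j hjS l hlS).asymm (hω' l hlS' j hjS')

theorem sum_measure_leading_le_one [Countable ι] (μ : Measure (ι → ℝ))
    [IsProbabilityMeasure μ] {k : ℕ} (T : Finset (Finset ι)) (hT : ∀ S ∈ T, #S = k) :
    ∑ S ∈ T, μ (leading S) ≤ 1 := by
  have hdisj : (T : Set (Finset ι)).PairwiseDisjoint leading := fun S hS S' hS' hne =>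
    disjoint_leading ((hT S hS).trans (hT S' hS').symm) hne
  rw [← measure_biUnion_finset hdisj fun S _ => measurableSet_leading S]
  exact prob_le_one

theorem sum_measure_leading_le_of_card_lt [Countable ι] (μ : Measure (ι → ℝ))
    [IsProbabilityMeasure μ] (T : Finset (Finset ι)) {D : ℕ} (hT : ∀ S ∈ T, #S < D) :
    ∑ S ∈ T, μ (leading S) ≤ D := by
  rw [← sum_fiberwise_of_maps_to (g := card) (t := range D)
    fun S hS => mem_range.2 (hT S hS)]
  calc ∑ k ∈ range D, ∑ S ∈ T with #S = k, μ (leading S) ≤ ∑ _k ∈ range D, 1 :=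
        sum_le_sum fun k _ => sum_measure_leading_le_one μ _ fun S hS => (mem_filter.1 hS).2
    _ = D := by simp

theorem two_mul_sum_le_of_card_mul_le {r : ι → ℝ} {ε R : ℝ} (hR : 0 ≤ R)
    (hmax : ∀ j, r j ≤ ε * R) {S : Finset ι} (hS : 2 * (#S * ε) ≤ 1) :
    2 * ∑ j ∈ S, r j ≤ R :=
  calc 2 * ∑ j ∈ S, r j ≤ 2 * (#S • (ε * R)) := by
        gcongr
        exact sum_le_card_nsmul S r _ fun j _ => hmax j
    _ = 2 * (#S * ε) * R := by rw [nsmul_eq_mul]; ring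
    _ ≤ R := mul_le_of_le_one_left hR hS

theorem mem_belowExactly_filter [Fintype ι] (ω : ι → ℝ) (l : ι) :
    ω ∈ belowExactly l {j | ω j < ω l} :=
  ⟨fun _ hj => (mem_filter.1 hj).2,
    fun j hj => not_lt.1 fun h => hj (mem_filter.2 ⟨mem_univ j, h⟩)⟩

theorem card_filter_lt_lt_of_le_orderStat {m D : ℕ} (hD : 1 ≤ D) {ω : Fin m → ℝ} {i : Fin m}
    (h : ω i ≤ orderStat D ω) : #{j | ω j < ω i} < D := by
  by_contra! hcard
  set F : Finset (Fin m) := {j | ω j < ω i}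
  have hF : F.Nonempty := card_pos.1 (by omega)
  have hmax : F.sup' hF ω < ω i := (sup'_lt_iff hF).2 fun j hj => (mem_filter.1 hj).2
  have hmem : D ≤ {j | ω j ≤ F.sup' hF ω}.ncard :=
    calc D ≤ #F := hcard
      _ = (F : Set (Fin m)).ncard := (ncard_coe_finset F).symm
      _ ≤ {j | ω j ≤ F.sup' hF ω}.ncard :=
        ncard_le_ncard (fun j hj => le_sup' ω hj) (toFinite _)
  obtain ⟨b, hb⟩ := (finite_range ω).bddBelow
  have hbdd : BddBelow {x : ℝ | D ≤ {j | ω j ≤ x}.ncard} := by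
    refine ⟨b, fun x hx => ?_⟩
    obtain ⟨j, hj⟩ := nonempty_of_ncard_ne_zero (Nat.one_le_iff_ne_zero.1 (hD.trans hx))
    exact (hb ⟨j, rfl⟩).trans hj
  exact (h.trans (csInf_le hbdd hmem)).not_gt hmax

end Events

section ExponentialRace

variable {n : ℕ}

theorem belowExactly_eq_setOf_succAbove {l : Fin (n + 1)} {S : Finset (Fin (n + 1))}
    (hl : l ∉ S) :
    belowExactly l S =
      {ω | ∀ j, ω (l.succAbove j) ∈ if l.succAbove j ∈ S then Iio (ω l) else Ici (ω l)} := by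
  ext ω
  simp only [belowExactly, mem_ofPred_eq]
  constructor
  · rintro ⟨hlt, hle⟩ j
    split_ifs with hj
    exacts [hlt _ hj, hle _ hj]
  · intro h
    refine ⟨fun j hj => ?_, fun j hj => ?_⟩
    · obtain ⟨j, rfl⟩ := Fin.exists_succAbove_eq (ne_of_mem_of_not_mem hj hl)
      simpa [hj] using h j
    · rcases eq_or_ne j l with rfl | hjl
      · exact le_rfl
      obtain ⟨j, rfl⟩ := Fin.exists_succAbove_eq hjl
      simpa [hj] using h j

/-- The `V(S)` of the header: the expected length of time `t ≥ 0` during which the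
coordinates below `t` are exactly those in `S`. -/
noncomputable def expectedSojourn {ι : Type*} [Fintype ι] [DecidableEq ι] (r : ι → ℝ)
    (S : Finset ι) : ENNReal :=
  ∫⁻ t in Ici 0, ∏ j, expLaw (r j) (if j ∈ S then Iio t else Ici t)

theorem measure_belowExactly {r : Fin (n + 1) → ℝ} (hr : ∀ j, 0 < r j) {l : Fin (n + 1)}
    {S : Finset (Fin (n + 1))} (hl : l ∉ S) :
    Measure.pi (fun j => expLaw (r j)) (belowExactly l S) =
      ENNReal.ofReal (r l) * expectedSojourn r S := by
  rw [belowExactly_eq_setOf_succAbove hl, Measure.pi_setOf_forall_succAbove_mem _ l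
    (fun j t => if l.succAbove j ∈ S then Iio t else Ici t), lintegral_expLaw (hr l),
    expectedSojourn]
  · congr 1
    refine lintegral_congr fun t => ?_
    rw [Fin.prod_univ_succAbove _ l, if_neg hl]
  · intro j
    by_cases hj : l.succAbove j ∈ S <;> simp only [hj, if_true, if_false, mem_Iio, mem_Ici]
    · exact measurableSet_lt measurable_snd measurable_fst
    · exact measurableSet_le measurable_fst measurable_snd

theorem sum_measure_belowExactly_le (μ : Fin (n + 1) → Measure ℝ) [∀ j, SigmaFinite (μ j)]
    [∀ j, NullSingletonClass (μ j)] (S : Finset (Fin (n + 1))) :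
    ∑ l ∈ Sᶜ, Measure.pi μ (belowExactly l S) ≤ Measure.pi μ (leading S) := by
  have hdisj : (↑Sᶜ : Set (Fin (n + 1))).Pairwise
      fun l l' => AEDisjoint (Measure.pi μ) (belowExactly l S) (belowExactly l' S) :=
    fun l hl l' hl' hne =>
      measure_mono_null (belowExactly_inter_subset (Finset.mem_compl.1 hl)
        (Finset.mem_compl.1 hl')) (Measure.pi_eval_eq_eval_null μ hne.symm)
  rw [← measure_biUnion_finset₀ hdisj
    fun l _ => (measurableSet_belowExactly l S).nullMeasurableSet]
  exact measure_mono (iUnion₂_subset fun l _ => belowExactly_subset_leading l S)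

theorem measure_belowExactly_le {r : Fin (n + 1) → ℝ} (hr : ∀ j, 0 < r j) {i : Fin (n + 1)}
    {S : Finset (Fin (n + 1))} (hi : i ∉ S) (hS : 2 * ∑ j ∈ S, r j ≤ ∑ j, r j) :
    Measure.pi (fun j => expLaw (r j)) (belowExactly i S) ≤
      ENNReal.ofReal (2 * r i / ∑ j, r j) * Measure.pi (fun j => expLaw (r j)) (leading S) := by
  have := fun j => nullSingletonClass_expLaw (hr j)
  set R := ∑ j, r j
  have hR : 0 < R := Finset.sum_pos (fun j _ => hr j) ⟨i, Finset.mem_univ i⟩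
  have hcompl : ∑ l ∈ Sᶜ, r l = R - ∑ j ∈ S, r j := by
    rw [eq_sub_iff_add_eq, add_comm, Finset.sum_add_sum_compl]
  set μ := Measure.pi fun j => expLaw (r j)
  calc μ (belowExactly i S) = ENNReal.ofReal (r i) * expectedSojourn r S :=
        measure_belowExactly hr hi
    _ ≤ ENNReal.ofReal (2 * r i / R) *
          (ENNReal.ofReal (∑ l ∈ Sᶜ, r l) * expectedSojourn r S) := by
      rw [← mul_assoc, ← ENNReal.ofReal_mul (div_nonneg (by linarith [hr i]) hR.le)]
      gcongr
      rw [hcompl, div_mul_eq_mul_div, le_div_iff₀ hR]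
      nlinarith [hr i]
    _ = ENNReal.ofReal (2 * r i / R) * ∑ l ∈ Sᶜ, μ (belowExactly l S) := by
      rw [ENNReal.ofReal_sum_of_nonneg fun l _ => (hr l).le, Finset.sum_mul]
      congr 1
      exact Finset.sum_congr rfl fun l hl =>
        (measure_belowExactly hr (Finset.mem_compl.1 hl)).symm
    _ ≤ _ := by
      gcongr
      exact sum_measure_belowExactly_le _ S

end ExponentialRace

end Paper

open Finset in
theorem exponential_order_statistic_general (m : ℕ) (r : Fin m → ℝ)
    (hr : ∀ i, 0 < r i) (ε : ℝ) (hε : 0 < ε)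
    (hmax : ∀ i, r i ≤ ε * ∑ j, r j)
    (D : ℕ) (hD1 : 1 ≤ D) (hD2 : (D : ℝ) ≤ 1 / (2 * ε)) (i : Fin m) :
    (Measure.pi fun j => expLaw (r j)) {ω | ω i ≤ orderStat D ω}
      ≤ ENNReal.ofReal (2 * D * r i / ∑ j, r j) := by
  obtain ⟨n, rfl⟩ := Nat.exists_eq_add_one_of_ne_zero i.pos.ne'
  set μ := Measure.pi fun j => expLaw (r j)
  set R := ∑ j, r j
  have hR : 0 < R := sum_pos (fun j _ => hr j) ⟨i, mem_univ i⟩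
  set T : Finset (Finset (Fin (n + 1))) := {S | i ∉ S ∧ #S < D}
  have hcover : {ω | ω i ≤ orderStat D ω} ⊆ ⋃ S ∈ T, belowExactly i S := fun ω hω =>
    mem_iUnion₂.2 ⟨_, by simp [T, card_filter_lt_lt_of_le_orderStat hD1 hω],
      mem_belowExactly_filter ω i⟩
  have hDε : 2 * (D * ε) ≤ 1 := by
    rw [le_div_iff₀ (by positivity)] at hD2
    linarith
  have hsmall (S) (hS : S ∈ T) : 2 * ∑ j ∈ S, r j ≤ R :=
    two_mul_sum_le_of_card_mul_le hR.le hmax <| hDε.trans' <| by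
      gcongr
      exact_mod_cast (mem_filter.1 hS).2.2.le
  calc μ {ω | ω i ≤ orderStat D ω} ≤ ∑ S ∈ T, μ (belowExactly i S) :=
        (measure_mono hcover).trans (measure_biUnion_finset_le T _)
    _ ≤ ∑ S ∈ T, ENNReal.ofReal (2 * r i / R) * μ (leading S) :=
        sum_le_sum fun S hS => measure_belowExactly_le hr (mem_filter.1 hS).2.1 (hsmall S hS)
    _ = ENNReal.ofReal (2 * r i / R) * ∑ S ∈ T, μ (leading S) := (mul_sum _ _ _).symm
    _ ≤ ENNReal.ofReal (2 * r i / R) * D := by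
        gcongr
        exact sum_measure_leading_le_of_card_lt μ T fun S hS => (mem_filter.1 hS).2.2
    _ = ENNReal.ofReal (2 * D * r i / R) := by
        rw [← ENNReal.ofReal_natCast,
          ← ENNReal.ofReal_mul (div_nonneg (by linarith [hr i]) hR.le)]
        congr 1
        ring

/-- **Lemma 11 (order statistics of exponentials).**  If `X_1, …, X_m` are independent
exponentials with rates `r_i`, `r = Σ r_i`, `r_i ≤ εr` for all `i`, and `1 ≤ D ≤ 1/(2ε)`,
then `P(X_i ≤ X_{(D)}) ≤ 2D r_i / r`. -/
theorem exponential_order_statistic (m : ℕ) (hm : 1 ≤ m) (r : Fin m → ℝ)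
    (hr : ∀ i, 0 < r i) (ε : ℝ) (hε : 0 < ε)
    (hmax : ∀ i, r i ≤ ε * ∑ j, r j)
    (D : ℕ) (hD1 : 1 ≤ D) (hD2 : (D : ℝ) ≤ 1 / (2 * ε)) (i : Fin m) :
    (Measure.pi fun j => expLaw (r j)) {ω | ω i ≤ orderStat D ω}
      ≤ ENNReal.ofReal (2 * D * r i / ∑ j, r j) :=
  exponential_order_statistic_general m r hr ε hε hmax D hD1 hD2 i
end

section
/- Let I and J be finite sets, A any set, τ : I × J → A a function, and a = (a_1, …, a_ℓ) ∈ A^ℓ a sequence with ℓ ≥ 1. Suppose there is a linear order on I such that for every j ∈ J there exists a nondecreasing map φ_j : I → {1, …, ℓ} with τ(i,j) = a_{φ_j(i)} for all i ∈ I (i.e., reading i ∈ I in increasing order, the values τ(i,j) form a subsequence of a, with repetitions in consecutive blocks). Let π_I and π_J be finite nonnegative measures (weight functions) on I and J respectively. Then there exist subsets S ⊆ I and T ⊆ J with π_I(S) ≥ π_I(I)/ℓ and π_J(T) ≥ π_J(J)/ℓ such that τ is constant on S × T. -/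
/-!
Lay the rows out on `[0, W]`, `W = π_I(I)`, in increasing order, row `i` occupying
`[L i, G i]` where `G i`, `L i` are the weights of `{i' ≤ i}` and `{i' < i}`, and cut `[0, W]`
into `ℓ` intervals of length `δ = W / ℓ`. The rows meeting the `k`-th open interval weigh at
least `δ`. For each column `j`, take the first `k` at which the rows with `φ_j ≤ k` weigh at
least `(k + 1) δ`: then every row meeting the `k`-th interval has `φ_j = k`, since the rows
with `φ_j < k` end before `k δ` and those with `φ_j > k` start at or after `(k + 1) δ`.
By weighted pigeonhole one `k` is chosen by columns of weight at least `π_J(J) / ℓ`.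
-/

open Finset

section WeightedOrder

variable {I : Type*} [Fintype I] [LinearOrder I] {w : I → ℝ}

def weightIic (w : I → ℝ) (i : I) : ℝ := ∑ i' with i' ≤ i, w i'

def weightIio (w : I → ℝ) (i : I) : ℝ := ∑ i' with i' < i, w i'

noncomputable def weightSlice (w : I → ℝ) (c d : ℝ) : Finset I :=
  {i | c < weightIic w i ∧ weightIio w i < d}

lemma sum_filter_weightIic_le (hw : 0 ≤ w) {c : ℝ} (hc : 0 ≤ c) :
    ∑ i with weightIic w i ≤ c, w i ≤ c := by
  set s : Finset I := {i | weightIic w i ≤ c}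
  rcases s.eq_empty_or_nonempty with hs | hs
  · simpa [hs] using hc
  calc ∑ i ∈ s, w i ≤ weightIic w (s.max' hs) :=
        sum_le_sum_of_subset_of_nonneg (fun i hi => by simpa using s.le_max' i hi)
          (fun i _ _ => hw i)
    _ ≤ c := (mem_filter.1 (s.max'_mem hs)).2

lemma sum_filter_le_weightIio_le (hw : 0 ≤ w) {d : ℝ} (hd : d ≤ ∑ i, w i) :
    ∑ i with d ≤ weightIio w i, w i ≤ ∑ i, w i - d := by
  set s : Finset I := {i | d ≤ weightIio w i}
  rcases s.eq_empty_or_nonempty with hs | hs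
  · simpa [hs] using hd
  have hsplit : weightIio w (s.min' hs) + ∑ i with ¬i < s.min' hs, w i = ∑ i, w i :=
    sum_filter_add_sum_filter_not _ _ _
  have hsub : ∑ i ∈ s, w i ≤ ∑ i with ¬i < s.min' hs, w i :=
    sum_le_sum_of_subset_of_nonneg
      (fun i hi => mem_filter.2 ⟨mem_univ _, not_lt.2 (s.min'_le i hi)⟩) (fun i _ _ => hw i)
  have hmin : d ≤ weightIio w (s.min' hs) := (mem_filter.1 (s.min'_mem hs)).2
  linarith

lemma sub_le_sum_weightSlice (hw : 0 ≤ w) {c d : ℝ} (hc : 0 ≤ c) (hd : d ≤ ∑ i, w i) :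
    d - c ≤ ∑ i ∈ weightSlice w c d, w i := by
  set A : Finset I := {i | weightIic w i ≤ c}
  set B : Finset I := {i | d ≤ weightIio w i}
  have hcompl : (weightSlice w c d)ᶜ ⊆ A ∪ B := by
    intro i
    simp only [A, B, weightSlice, mem_compl, mem_filter, mem_univ, true_and, mem_union,
      not_and_or, not_lt, imp_self]
  have hcompl_le : ∑ i ∈ (weightSlice w c d)ᶜ, w i ≤ ∑ i ∈ A ∪ B, w i :=
    sum_le_sum_of_subset_of_nonneg hcompl fun i _ _ => hw i
  have hunion := sum_union_inter (s₁ := A) (s₂ := B) (f := w)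
  have hinter : 0 ≤ ∑ i ∈ A ∩ B, w i := sum_nonneg fun i _ => hw i
  have htotal := sum_add_sum_compl (weightSlice w c d) w
  linarith [sum_filter_weightIic_le hw hc, sum_filter_le_weightIio_le hw hd]

variable {β : Type*} [LinearOrder β] {φ : I → β}

lemma weightIic_le_sum_filter_le (hw : 0 ≤ w) (hφ : Monotone φ) (i : I) :
    weightIic w i ≤ ∑ i' with φ i' ≤ φ i, w i' :=
  sum_le_sum_of_subset_of_nonneg (fun _ h => by simpa using hφ (by simpa using h))
    fun i _ _ => hw i

lemma sum_filter_le_le_weightIio (hw : 0 ≤ w) (hφ : Monotone φ) {k : β} {i : I}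
    (hk : k < φ i) :
    ∑ i' with φ i' ≤ k, w i' ≤ weightIio w i :=
  sum_le_sum_of_subset_of_nonneg
    (fun i' h => by
      simp only [mem_filter, mem_univ, true_and] at h ⊢
      exact hφ.reflect_lt (h.trans_lt hk))
    fun i _ _ => hw i

lemma exists_weightSlice_subset_fiber {ℓ : ℕ} [NeZero ℓ] (hw : 0 ≤ w) {φ : I → Fin ℓ}
    (hφ : Monotone φ) {δ : ℝ} (hδ : 0 ≤ δ) (hℓδ : ℓ * δ ≤ ∑ i, w i) :
    ∃ k : Fin ℓ, ∀ i ∈ weightSlice w (k.val * δ) ((k.val + 1) * δ), φ i = k := by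
  set K : Finset (Fin ℓ) := {k | (k.val + 1) * δ ≤ ∑ i with φ i ≤ k, w i}
  have hK : K.Nonempty := by
    refine ⟨⊤, mem_filter.2 ⟨mem_univ _, ?_⟩⟩
    have hℓ : ((⊤ : Fin ℓ).val + 1 : ℝ) = ℓ := by
      rw [Fin.val_top]; exact_mod_cast Nat.sub_add_cancel NeZero.one_le
    simpa only [hℓ, le_top, filter_true] using hℓδ
  set k := K.min' hK
  have hk : (k.val + 1) * δ ≤ ∑ i with φ i ≤ k, w i := (mem_filter.1 (K.min'_mem hK)).2
  have hbefore : ∀ k' < k, ∑ i with φ i ≤ k', w i < (k'.val + 1) * δ := fun k' hk' =>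
    not_le.1 fun h => (K.min'_le k' (mem_filter.2 ⟨mem_univ _, h⟩)).not_gt hk'
  refine ⟨k, fun i hi => ?_⟩
  obtain ⟨hG, hL⟩ := (mem_filter.1 hi).2
  rcases lt_trichotomy (φ i) k with h | h | h
  · have hcast : ((φ i).val + 1 : ℝ) ≤ k.val := by exact_mod_cast h
    linarith [weightIic_le_sum_filter_le hw hφ i, hbefore _ h,
      mul_le_mul_of_nonneg_right hcast hδ]
  · exact h
  · linarith [sum_filter_le_le_weightIio hw hφ h]

end WeightedOrder

theorem lemma_matrix_general (I J : Type*) [Fintype I] [Fintype J] [LinearOrder I]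
    (A : Type*) (τ : I → J → A) (ℓ : ℕ) (hℓ : 1 ≤ ℓ) (a : Fin ℓ → A)
    (hrespect : ∀ j : J, ∃ φ : I → Fin ℓ, Monotone φ ∧ ∀ i, τ i j = a (φ i))
    (wI : I → ℝ) (wJ : J → ℝ) (hwI : ∀ i, 0 ≤ wI i) :
    ∃ (S : Finset I) (T : Finset J) (a0 : A),
      (∑ i, wI i) / ℓ ≤ ∑ i ∈ S, wI i ∧
      (∑ j, wJ j) / ℓ ≤ ∑ j ∈ T, wJ j ∧
      ∀ i ∈ S, ∀ j ∈ T, τ i j = a0 := by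
  have : NeZero ℓ := ⟨by omega⟩
  have hℓ0 : (0 : ℝ) < ℓ := by exact_mod_cast hℓ
  set δ := (∑ i, wI i) / ℓ
  have hδ : 0 ≤ δ := div_nonneg (sum_nonneg fun i _ => hwI i) hℓ0.le
  have hℓδ : ℓ * δ = ∑ i, wI i := mul_div_cancel₀ _ hℓ0.ne'
  choose φ hφ hτ using hrespect
  choose k hk using fun j => exists_weightSlice_subset_fiber hwI (hφ j) hδ hℓδ.le
  obtain ⟨k₀, hk₀⟩ := Fintype.exists_le_sum_fiber_of_nsmul_le_sum (f := k) (w := wJ)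
    (b := (∑ j, wJ j) / ℓ)
    (by rw [Fintype.card_fin, nsmul_eq_mul, mul_div_cancel₀ _ hℓ0.ne'])
  refine ⟨weightSlice wI (k₀.val * δ) ((k₀.val + 1) * δ), ({j | k j = k₀} : Finset J),
    a k₀, ?_, hk₀, ?_⟩
  · have hk₀ℓ : (k₀.val + 1 : ℝ) ≤ ℓ := by exact_mod_cast k₀.isLt
    have := sub_le_sum_weightSlice hwI (c := k₀.val * δ) (d := (k₀.val + 1) * δ)
      (by positivity) (by rw [← hℓδ]; gcongr)
    linarith
  · intro i hi j hj
    obtain rfl : k j = k₀ := (mem_filter.1 hj).2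
    rw [hτ, hk j i hi]

/-- **Lemma 13 (a matrix lemma).**  Suppose `τ : I × J → A` and, for some sequence
`a = (a_1, …, a_ℓ)`, the map `i ↦ τ(i,j)` respects `a` for every `j` (with respect to a
fixed linear order on `I`).  Then for any finite nonnegative weight measures on `I` and
`J` there are sets `S ⊆ I`, `T ⊆ J` carrying at least a `1/ℓ` fraction of each total
weight, on which `τ` is constant. -/
theorem lemma_matrix (I J : Type*) [Fintype I] [Fintype J] [LinearOrder I]
    (A : Type*) (τ : I → J → A) (ℓ : ℕ) (hℓ : 1 ≤ ℓ) (a : Fin ℓ → A)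
    (hrespect : ∀ j : J, ∃ φ : I → Fin ℓ, Monotone φ ∧ ∀ i, τ i j = a (φ i))
    (wI : I → ℝ) (wJ : J → ℝ) (hwI : ∀ i, 0 ≤ wI i) (hwJ : ∀ j, 0 ≤ wJ j) :
    ∃ (S : Finset I) (T : Finset J) (a0 : A),
      (∑ i, wI i) / ℓ ≤ ∑ i ∈ S, wI i ∧
      (∑ j, wJ j) / ℓ ≤ ∑ j ∈ T, wJ j ∧
      ∀ i ∈ S, ∀ j ∈ T, τ i j = a0 :=
  lemma_matrix_general I J A τ ℓ hℓ a hrespect wI wJ hwI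
end

section
/- Let R be a rate matrix on V = {1,…,n} with transition matrix M, stationary distribution σ, and λ = λ(R), and let d > 0 satisfy d_R(u) ≥ d for all u ∈ V. Let θ ≥ 1 and let G be a graph on V with maximum degree at most θ − 1 such that d_G(u) = 0 whenever d_R(u) ≥ θd. Let π be a probability measure on V, define π'(v) = Σ_{u∈V} π(u)·M(u,v), and let π'' be any probability measure of the form π''(u) = Σ_{v∈V} π'(v)·K(v,u), where K is a stochastic matrix with K(v,u) = 0 unless u = v or {u,v} is an edge of G. Then: μ_σ(π') ≤ λ·μ_σ(π), and μ_σ(π'')² ≤ θ⁴·(μ_σ(π')² + 1). -/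
open Filter MeasureTheory ProbabilityTheory Real
open scoped ENNReal NNReal Classical

namespace Paper

variable {n : ℕ}

/-- Row sum `d_R(u)`. -/
noncomputable def rowSum (R : Matrix (Fin n) (Fin n) ℝ) (u : Fin n) : ℝ := ∑ v, R u v

/-- Total sum `d_R(V)`. -/
noncomputable def totalSum (R : Matrix (Fin n) (Fin n) ℝ) : ℝ := ∑ u, rowSum R u

/-- A rate matrix: symmetric, nonnegative entries, positive row sums. -/
def IsRateMatrix (R : Matrix (Fin n) (Fin n) ℝ) : Prop :=
  (∀ u v, R u v = R v u) ∧ (∀ u v, 0 ≤ R u v) ∧ (∀ u, 0 < rowSum R u)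

/-- Transition matrix `M(u,v) = R(u,v)/d_R(u)`. -/
noncomputable def transM (R : Matrix (Fin n) (Fin n) ℝ) (u v : Fin n) : ℝ :=
  R u v / rowSum R u

/-- Stationary distribution `σ(u) = d_R(u)/d_R(V)`. -/
noncomputable def statDist (R : Matrix (Fin n) (Fin n) ℝ) (u : Fin n) : ℝ :=
  rowSum R u / totalSum R

/-- `σ(A)` for a finite vertex set `A`. -/
noncomputable def statDistSet (R : Matrix (Fin n) (Fin n) ℝ) (A : Finset (Fin n)) : ℝ :=
  ∑ u ∈ A, statDist R u

/-- `‖M‖ = max M(u,v)`. -/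
noncomputable def Mnorm (R : Matrix (Fin n) (Fin n) ℝ) : ℝ :=
  sSup {x : ℝ | ∃ u v, x = transM R u v}

/-- `‖R‖ = max R(u,v)`. -/
noncomputable def Rnorm (R : Matrix (Fin n) (Fin n) ℝ) : ℝ :=
  sSup {x : ℝ | ∃ u v, x = R u v}

/-- `μ_σ(π)`, the distance of `π` from stationarity. -/
noncomputable def muSigma (R : Matrix (Fin n) (Fin n) ℝ) (q : Fin n → ℝ) : ℝ :=
  Real.sqrt ((∑ v, (q v) ^ 2 / statDist R v) - 1)

/-- `λ(R) = max{|λ₂|, |λₙ|}`: since the transition matrix `M` of a rate matrix is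
reversible with respect to `σ` (hence self-adjoint in `L²(σ)` with largest eigenvalue `1`,
eigenvector the constants), this quantity equals the operator norm of `M` on the
`σ`-orthogonal complement of the constant functions. -/
noncomputable def lam (R : Matrix (Fin n) (Fin n) ℝ) : ℝ :=
  sSup {l : ℝ | ∃ g : Fin n → ℝ,
    (∑ v, g v * statDist R v) = 0 ∧ (∑ v, (g v) ^ 2 * statDist R v) = 1 ∧
    l = Real.sqrt (∑ v, (∑ u, transM R v u * g u) ^ 2 * statDist R v)}

/-- `γ_k(P) = Σ_u d_P(u)^{k-1} e^{-d_P(u)}`. -/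
noncomputable def gammaK (k : ℕ) (P : Matrix (Fin n) (Fin n) ℝ) : ℝ :=
  ∑ u, rowSum P u ^ (k - 1) * Real.exp (-(rowSum P u))

/-- The class `RM` of sequences of rate matrices, with scale `d = d(n)`. -/
def InRM (R : ∀ n, Matrix (Fin n) (Fin n) ℝ) (d : ℕ → ℝ) : Prop :=
  (∀ n, IsRateMatrix (R n)) ∧
  Tendsto (fun n => lam (R n)) atTop (nhds 0) ∧
  ∃ α γ b : ℝ, 0 ≤ α ∧ α < 1 / 2 ∧ 0 < γ ∧ 0 < b ∧
    (∀ n, lam (R n) ≤ ((n : ℝ) * Mnorm (R n)) ^ (-(α + γ))) ∧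
    (∀ n, 0 < d n ∧ (∀ u, d n ≤ rowSum (R n) u) ∧ totalSum (R n) ≤ b * d n * n) ∧
    (∀ n, ∀ A : Finset (Fin n), statDistSet (R n) A ≤ b * ((A.card : ℝ) / n) ^ (1 - 2 * α)) ∧
    (∀ n, Rnorm (R n) ≤ d n * (n : ℝ) ^ (-γ))

/-- The symmetric rate function on unordered pairs induced by `R`
(equal to `R u v` whenever `R` is symmetric). -/
noncomputable def symRate (R : Matrix (Fin n) (Fin n) ℝ) : Sym2 (Fin n) → ℝ :=
  Sym2.lift ⟨fun u v => (R u v + R v u) / 2, fun u v => by ring⟩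

/-- The law of a single exponential clock `E(u,v)` (valued in `ℝ≥0∞`, equal to `∞`
when the rate vanishes). -/
noncomputable def edgeMeasure (r : ℝ) : Measure ℝ≥0∞ :=
  if 0 < r then (expMeasure r).map ENNReal.ofReal else Measure.dirac ⊤

instance edgeMeasure.instIsProbabilityMeasure (r : ℝ) :
    IsProbabilityMeasure (edgeMeasure r) := by
  unfold edgeMeasure
  split
  · have := isProbabilityMeasure_expMeasure ‹0 < r›
    exact Measure.isProbabilityMeasure_map ENNReal.measurable_ofReal.aemeasurable
  · exact Measure.dirac.isProbabilityMeasure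

/-- The sample space of the random graph process: the family of exponential clocks. -/
abbrev ProcSpace (n : ℕ) := Sym2 (Fin n) → ℝ≥0∞

/-- The law of the whole family of independent exponential clocks. -/
noncomputable def procMeasure (R : Matrix (Fin n) (Fin n) ℝ) : Measure (ProcSpace n) :=
  Measure.pi fun e => edgeMeasure (symRate R e)

/-- The graph `G_{n,R}(t)` at time `t`. -/
def graphAt (ω : ProcSpace n) (t : ℝ≥0∞) : SimpleGraph (Fin n) where
  Adj u v := u ≠ v ∧ ω s(u, v) ≤ t
  symm := ⟨by
    intro u v h
    refine ⟨h.1.symm, ?_⟩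
    rw [Sym2.eq_swap]
    exact h.2⟩
  loopless := ⟨fun u h => h.1 rfl⟩

/-- The degree of a vertex. -/
noncomputable def deg {V : Type*} (G : SimpleGraph V) (v : V) : ℕ := (G.neighborSet v).ncard

/-- The (outer) neighbourhood `N_G(A)` of a vertex set. -/
def nbr {V : Type*} (G : SimpleGraph V) (A : Set V) : Set V :=
  {v | v ∉ A ∧ ∃ u ∈ A, G.Adj u v}

/-- A finite set of unordered pairs forming a matching (pairwise disjoint non-loops). -/
def IsMatchingFinset {V : Type*} (F : Finset (Sym2 V)) : Prop :=
  (∀ e ∈ F, ¬ e.IsDiag) ∧ ∀ e ∈ F, ∀ f ∈ F, e ≠ f → ∀ v, v ∈ e → v ∉ f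

/-- Property `A_k`: `⌊k/2⌋` Hamilton cycles plus, for odd `k`, a matching of size
`⌊n/2⌋`, all mutually edge-disjoint. -/
def HasAk {V : Type*} [Fintype V] (k : ℕ) (G : SimpleGraph V) : Prop :=
  ∃ (c : Fin (k / 2) → Set (Sym2 V)) (F : Finset (Sym2 V)),
    (∀ i, ∃ (v : V) (w : G.Walk v v), w.IsHamiltonianCycle ∧ c i = {e | e ∈ w.edges}) ∧
    (∀ i j, i ≠ j → Disjoint (c i) (c j)) ∧
    (if Odd k then
      ↑F ⊆ G.edgeSet ∧ IsMatchingFinset F ∧ F.card = Fintype.card V / 2 ∧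
        ∀ i, Disjoint (c i) (↑F : Set (Sym2 V))
    else F = ∅)

/-- `τ_k`: the hitting time of minimum degree `k`. -/
noncomputable def tauDeg (k : ℕ) (ω : ProcSpace n) : ℝ≥0∞ :=
  sInf {t : ℝ≥0∞ | ∀ v, k ≤ deg (graphAt ω t) v}

/-- `τ_{A_k}`: the hitting time of property `A_k`. -/
noncomputable def tauA (k : ℕ) (ω : ProcSpace n) : ℝ≥0∞ :=
  sInf {t : ℝ≥0∞ | HasAk k (graphAt ω t)}
end Paper

open Paper Filter

/-!
Write `π = σ (1 + f)`, so that `∑ f σ = 0` and `μ_σ(π)` is the `L²(σ)`-norm of `f`.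
Reversibility `σ(u) M(u,v) = σ(v) M(v,u)` gives `π' = σ (1 + M f)`, so
`μ_σ(π') = ‖M f‖ ≤ λ ‖f‖`, as `λ` is the norm of `M` on centred functions.

For the `G`-step, `π''(u)` collects mass only from `u` and its at most `θ - 1` neighbours,
which are light: `σ(v) ≤ θ σ(u)` for each of them because `d_R(v) < θ d ≤ θ d_R(u)`.
Cauchy–Schwarz over these at most `θ` contributions gives
`∑ π''²/σ ≤ θ² ∑ π'²/σ = θ² (μ_σ(π')² + 1)`.
-/

open Finset

namespace Paper

variable {n : ℕ}

lemma sq_sum_mul_le_sum_mul_sum_mul_sq {ι : Type*} (s : Finset ι) {w : ι → ℝ}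
    (hw : ∀ i ∈ s, 0 ≤ w i) (x : ι → ℝ) :
    (∑ i ∈ s, w i * x i) ^ 2 ≤ (∑ i ∈ s, w i) * ∑ i ∈ s, w i * x i ^ 2 :=
  sum_sq_le_sum_mul_sum_of_sq_le_mul s hw (fun i hi => mul_nonneg (hw i hi) (sq_nonneg _))
    fun i _ => (by ring : (w i * x i) ^ 2 = w i * (w i * x i ^ 2)).le

lemma nonempty_of_sum_eq_one {ι : Type*} [Fintype ι] {p : ι → ℝ} (hp1 : ∑ i, p i = 1) :
    Nonempty ι :=
  univ_nonempty_iff.mp (nonempty_of_sum_ne_zero (hp1 ▸ one_ne_zero))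

lemma sum_sq_div_le_of_kernel {ι : Type*} [Fintype ι] {σ : ι → ℝ} (hσ : ∀ i, 0 < σ i)
    {K : Matrix ι ι ℝ} (hK0 : ∀ v u, 0 ≤ K v u) (hK1 : ∀ v, ∑ u, K v u = 1)
    {θ : ℝ} (hθ : 0 ≤ θ) (hcol : ∀ u, ∑ v, K v u ≤ θ)
    (hratio : ∀ v u, K v u ≠ 0 → σ v ≤ θ * σ u) (x : ι → ℝ) :
    ∑ u, (∑ v, x v * K v u) ^ 2 / σ u ≤ θ ^ 2 * ∑ v, x v ^ 2 / σ v := by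
  have hterm : ∀ u v, K v u * x v ^ 2 / σ u ≤ θ * (K v u * x v ^ 2 / σ v) := by
    intro u v
    rcases eq_or_ne (K v u) 0 with hK | hK
    · simp [hK]
    rw [← mul_div_assoc, div_le_div_iff₀ (hσ u) (hσ v)]
    exact mul_le_mul_of_nonneg_left (hratio v u hK) (mul_nonneg (hK0 v u) (sq_nonneg _))
      |>.trans_eq (by ring)
  calc ∑ u, (∑ v, x v * K v u) ^ 2 / σ u
      ≤ ∑ u, θ * ∑ v, K v u * x v ^ 2 / σ u := by
        gcongr with u
        rw [← sum_div, ← mul_div_assoc]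
        gcongr
        · exact (hσ u).le
        calc (∑ v, x v * K v u) ^ 2 = (∑ v, K v u * x v) ^ 2 := by simp only [mul_comm]
          _ ≤ (∑ v, K v u) * ∑ v, K v u * x v ^ 2 :=
            sq_sum_mul_le_sum_mul_sum_mul_sq _ (fun v _ => hK0 v u) x
          _ ≤ θ * ∑ v, K v u * x v ^ 2 := by
            gcongr
            · exact sum_nonneg fun v _ => mul_nonneg (hK0 v u) (sq_nonneg _)
            · exact hcol u
    _ ≤ ∑ u, θ * ∑ v, θ * (K v u * x v ^ 2 / σ v) := by
        gcongr with u _ v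
        exact hterm u v
    _ = θ ^ 2 * ∑ v, x v ^ 2 / σ v := by
        simp only [← mul_sum, sum_comm (γ := ι) (f := fun u v => K v u * x v ^ 2 / σ v)]
        simp only [mul_div_assoc, ← sum_mul, hK1, one_mul]
        ring

namespace IsRateMatrix

variable {R : Matrix (Fin n) (Fin n) ℝ}

lemma rowSum_le_totalSum (hR : IsRateMatrix R) (u : Fin n) : rowSum R u ≤ totalSum R :=
  single_le_sum (fun v _ => (hR.2.2 v).le) (mem_univ u)

lemma statDist_pos (hR : IsRateMatrix R) (u : Fin n) : 0 < statDist R u :=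
  div_pos (hR.2.2 u) ((hR.2.2 u).trans_le (hR.rowSum_le_totalSum u))

lemma sum_statDist [Nonempty (Fin n)] (hR : IsRateMatrix R) : ∑ u, statDist R u = 1 := by
  obtain ⟨u⟩ := ‹Nonempty (Fin n)›
  simp only [statDist, ← sum_div]
  exact div_self ((hR.2.2 u).trans_le (hR.rowSum_le_totalSum u)).ne'

lemma transM_nonneg (hR : IsRateMatrix R) (u v : Fin n) : 0 ≤ transM R u v :=
  div_nonneg (hR.2.1 u v) (hR.2.2 u).le

lemma sum_transM (hR : IsRateMatrix R) (u : Fin n) : ∑ v, transM R u v = 1 := by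
  simp only [transM, ← sum_div]
  exact div_self (hR.2.2 u).ne'

lemma statDist_mul_transM (hR : IsRateMatrix R) (u v : Fin n) :
    statDist R u * transM R u v = statDist R v * transM R v u := by
  simp only [statDist, transM, hR.1 u v]
  field_simp [(hR.2.2 u).ne', (hR.2.2 v).ne']

lemma sum_statDist_mul_transM (hR : IsRateMatrix R) (v : Fin n) :
    ∑ u, statDist R u * transM R u v = statDist R v := by
  simp only [hR.statDist_mul_transM _ v, ← mul_sum, hR.sum_transM, mul_one]

lemma sum_sum_mul_transM (hR : IsRateMatrix R) (p : Fin n → ℝ) :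
    ∑ v, ∑ u, p u * transM R u v = ∑ u, p u := by
  rw [sum_comm]
  simp only [← mul_sum, hR.sum_transM, mul_one]

lemma sum_mul_transM_div_statDist (hR : IsRateMatrix R) (p : Fin n → ℝ) (v : Fin n) :
    (∑ u, p u * transM R u v) / statDist R v = ∑ u, transM R v u * (p u / statDist R u) := by
  rw [sum_div]
  refine sum_congr rfl fun u _ => ?_
  have hrev := hR.statDist_mul_transM u v
  field_simp [(hR.statDist_pos u).ne', (hR.statDist_pos v).ne']
  linear_combination p u * hrev

lemma sum_sq_transM_apply_mul_statDist_le (hR : IsRateMatrix R) (g : Fin n → ℝ) :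
    ∑ v, (∑ u, transM R v u * g u) ^ 2 * statDist R v ≤ ∑ v, g v ^ 2 * statDist R v :=
  calc ∑ v, (∑ u, transM R v u * g u) ^ 2 * statDist R v
      ≤ ∑ v, (∑ u, transM R v u * g u ^ 2) * statDist R v := by
        gcongr with v
        · exact (hR.statDist_pos v).le
        simpa [hR.sum_transM] using
          sq_sum_mul_le_sum_mul_sum_mul_sq univ (fun u _ => hR.transM_nonneg v u) g
    _ = ∑ u, g u ^ 2 * ∑ v, statDist R v * transM R v u := by
        simp only [sum_mul, mul_sum]
        exact sum_comm.trans (sum_congr rfl fun _ _ => sum_congr rfl fun _ _ => by ring)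
    _ = ∑ v, g v ^ 2 * statDist R v := by simp only [hR.sum_statDist_mul_transM]

lemma sqrt_sum_sq_transM_apply_le_lam (hR : IsRateMatrix R) {g : Fin n → ℝ}
    (hg0 : ∑ v, g v * statDist R v = 0) (hg1 : ∑ v, g v ^ 2 * statDist R v = 1) :
    √(∑ v, (∑ u, transM R v u * g u) ^ 2 * statDist R v) ≤ lam R := by
  refine le_csSup ⟨1, ?_⟩ ⟨g, hg0, hg1, rfl⟩
  rintro l ⟨g, -, hg1, rfl⟩
  rw [← Real.sqrt_one, ← hg1]
  exact Real.sqrt_le_sqrt (hR.sum_sq_transM_apply_mul_statDist_le g)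

lemma sqrt_sum_sq_transM_apply_le (hR : IsRateMatrix R) {g : Fin n → ℝ}
    (hg0 : ∑ v, g v * statDist R v = 0) :
    √(∑ v, (∑ u, transM R v u * g u) ^ 2 * statDist R v) ≤
      lam R * √(∑ v, g v ^ 2 * statDist R v) := by
  set c := √(∑ v, g v ^ 2 * statDist R v)
  have hnorm_sq : ∑ v, g v ^ 2 * statDist R v = c ^ 2 :=
    (Real.sq_sqrt (sum_nonneg fun v _ => mul_nonneg (sq_nonneg _) (hR.statDist_pos v).le)).symm
  have hc_nonneg : 0 ≤ c := Real.sqrt_nonneg _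
  rcases hc_nonneg.eq_or_lt with hc0 | hc0
  · rw [← hc0, mul_zero, Real.sqrt_eq_zero'.mpr]
    exact (hR.sum_sq_transM_apply_mul_statDist_le g).trans (by rw [hnorm_sq, ← hc0]; norm_num)
  have hscale := hR.sqrt_sum_sq_transM_apply_le_lam (g := fun u => g u / c)
    (by simp only [div_mul_eq_mul_div, ← sum_div, hg0, zero_div])
    (by
      simp only [div_pow, div_mul_eq_mul_div, ← sum_div, hnorm_sq]
      exact div_self (pow_pos hc0 2).ne')
  simp only [← mul_div_assoc, ← sum_div, div_pow, div_mul_eq_mul_div] at hscale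
  rwa [Real.sqrt_div' _ (sq_nonneg c), Real.sqrt_sq hc0.le, div_le_iff₀ hc0] at hscale

lemma muSigma_eq_sqrt_sum_sq_density_sub_one (hR : IsRateMatrix R) {p : Fin n → ℝ}
    (hp1 : ∑ v, p v = 1) :
    muSigma R p = √(∑ v, (p v / statDist R v - 1) ^ 2 * statDist R v) := by
  have := nonempty_of_sum_eq_one hp1
  have hexpand : ∀ v, (p v / statDist R v - 1) ^ 2 * statDist R v =
      p v ^ 2 / statDist R v - 2 * p v + statDist R v := by
    intro v
    field_simp [(hR.statDist_pos v).ne']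
    ring
  rw [muSigma]
  congr 1
  simp only [hexpand, sum_add_distrib, sum_sub_distrib, ← mul_sum, hp1, hR.sum_statDist]
  ring

lemma muSigma_transM_le (hR : IsRateMatrix R) {p : Fin n → ℝ} (hp1 : ∑ v, p v = 1) :
    muSigma R (fun v => ∑ u, p u * transM R u v) ≤ lam R * muSigma R p := by
  set f := fun u => p u / statDist R u - 1
  have hf0 : ∑ v, f v * statDist R v = 0 := by
    have := nonempty_of_sum_eq_one hp1
    have hterm : ∀ v, f v * statDist R v = p v - statDist R v := fun v => by
      simp only [f]
      field_simp [(hR.statDist_pos v).ne']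
    simp only [hterm, sum_sub_distrib, hp1, hR.sum_statDist, sub_self]
  have hdensity : ∀ v, (∑ u, p u * transM R u v) / statDist R v - 1 =
      ∑ u, transM R v u * f u := fun v => by
    simp only [f, hR.sum_mul_transM_div_statDist, mul_sub, sum_sub_distrib, mul_one,
      hR.sum_transM]
  rw [hR.muSigma_eq_sqrt_sum_sq_density_sub_one (hp1 ▸ hR.sum_sum_mul_transM p),
    hR.muSigma_eq_sqrt_sum_sq_density_sub_one hp1]
  simp only [hdensity]
  exact hR.sqrt_sum_sq_transM_apply_le hf0

lemma sq_muSigma_le (hR : IsRateMatrix R) (q : Fin n → ℝ) :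
    muSigma R q ^ 2 ≤ ∑ v, q v ^ 2 / statDist R v := by
  rw [muSigma, Real.sq_sqrt']
  exact max_le (by linarith)
    (sum_nonneg fun v _ => div_nonneg (sq_nonneg _) (hR.statDist_pos v).le)

lemma sq_muSigma_add_one (hR : IsRateMatrix R) {p : Fin n → ℝ} (hp1 : ∑ v, p v = 1) :
    muSigma R p ^ 2 + 1 = ∑ v, p v ^ 2 / statDist R v := by
  have := nonempty_of_sum_eq_one hp1
  have hsedrakyan := sq_sum_div_le_sum_sq_div univ p fun v _ => hR.statDist_pos v
  rw [hp1, hR.sum_statDist, one_pow, div_one] at hsedrakyan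
  rw [muSigma, Real.sq_sqrt (by linarith)]
  ring

end IsRateMatrix

lemma deg_eq_card_neighborFinset {V : Type*} (G : SimpleGraph V) (v : V)
    [Fintype (G.neighborSet v)] : deg G v = #(G.neighborFinset v) :=
  Set.ncard_eq_toFinset_card' _

lemma sum_column_le_deg_add_one {V : Type*} [Fintype V] {G : SimpleGraph V} {K : Matrix V V ℝ}
    (hK0 : ∀ v u, 0 ≤ K v u) (hK1 : ∀ v, ∑ u, K v u = 1)
    (hKG : ∀ v u, K v u ≠ 0 → u = v ∨ G.Adj u v) (u : V) :
    ∑ v, K v u ≤ deg G u + 1 := by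
  have hsupp : ∀ v ∉ insert u (G.neighborFinset u), K v u = 0 := by
    intro v hv
    by_contra hK
    rcases hKG v u hK with rfl | hadj
    · exact hv (mem_insert_self _ _)
    · exact hv (mem_insert_of_mem ((G.mem_neighborFinset u v).mpr hadj))
  calc ∑ v, K v u = ∑ v ∈ insert u (G.neighborFinset u), K v u :=
        (sum_subset (subset_univ _) fun v _ hv => hsupp v hv).symm
    _ ≤ ∑ v ∈ insert u (G.neighborFinset u), (1 : ℝ) := sum_le_sum fun v _ =>
        (single_le_sum (fun w _ => hK0 v w) (mem_univ u)).trans_eq (hK1 v)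
    _ ≤ deg G u + 1 := by
        rw [sum_const, nsmul_one, deg_eq_card_neighborFinset]
        exact_mod_cast card_insert_le _ _

lemma statDist_le_mul_of_adj {R : Matrix (Fin n) (Fin n) ℝ} (hR : IsRateMatrix R)
    {G : SimpleGraph (Fin n)} {d θ : ℝ} (hθ : 0 ≤ θ) (hdlow : ∀ u, d ≤ rowSum R u)
    (hheavy : ∀ u, θ * d ≤ rowSum R u → deg G u = 0) {u v : Fin n} (hadj : G.Adj u v) :
    statDist R v ≤ θ * statDist R u := by
  have hdeg : deg G v ≠ 0 := by
    rw [deg_eq_card_neighborFinset]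
    exact card_ne_zero_of_mem ((G.mem_neighborFinset v u).mpr hadj.symm)
  have hlight : rowSum R v < θ * d := lt_of_not_ge fun h => hdeg (hheavy v h)
  rw [statDist, statDist, ← mul_div_assoc]
  exact div_le_div_of_nonneg_right (by nlinarith [hdlow u])
    ((hR.2.2 u).le.trans (hR.rowSum_le_totalSum u))

end Paper

theorem lemma_semirandom_step_general (n : ℕ) (R : Matrix (Fin n) (Fin n) ℝ)
    (hR : IsRateMatrix R)
    (d : ℝ) (hdlow : ∀ u, d ≤ rowSum R u)
    (θ : ℝ) (hθ : 1 ≤ θ) (G : SimpleGraph (Fin n))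
    (hmax : ∀ u, (deg G u : ℝ) ≤ θ - 1)
    (hheavy : ∀ u, θ * d ≤ rowSum R u → deg G u = 0)
    (p : Fin n → ℝ) (hp1 : (∑ v, p v) = 1)
    (K : Matrix (Fin n) (Fin n) ℝ) (hK0 : ∀ v u, 0 ≤ K v u)
    (hK1 : ∀ v, (∑ u, K v u) = 1)
    (hKG : ∀ v u, K v u ≠ 0 → u = v ∨ G.Adj u v) :
    muSigma R (fun v => ∑ u, p u * transM R u v) ≤ lam R * muSigma R p ∧
    muSigma R (fun u => ∑ v, (∑ w, p w * transM R w v) * K v u) ^ 2 ≤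
      θ ^ 4 * (muSigma R (fun v => ∑ u, p u * transM R u v) ^ 2 + 1) := by
  refine ⟨hR.muSigma_transM_le hp1, ?_⟩
  have hcol : ∀ u, ∑ v, K v u ≤ θ := fun u =>
    (sum_column_le_deg_add_one hK0 hK1 hKG u).trans (by linarith [hmax u])
  have hratio : ∀ v u, K v u ≠ 0 → statDist R v ≤ θ * statDist R u := by
    intro v u hK
    rcases hKG v u hK with rfl | hadj
    · exact le_mul_of_one_le_left (hR.statDist_pos _).le hθ
    · exact statDist_le_mul_of_adj hR (by linarith) hdlow hheavy hadj
  calc muSigma R (fun u => ∑ v, (∑ w, p w * transM R w v) * K v u) ^ 2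
      ≤ ∑ u, (∑ v, (∑ w, p w * transM R w v) * K v u) ^ 2 / statDist R u :=
        hR.sq_muSigma_le _
    _ ≤ θ ^ 2 * ∑ v, (∑ w, p w * transM R w v) ^ 2 / statDist R v :=
        sum_sq_div_le_of_kernel hR.statDist_pos hK0 hK1 (by linarith) hcol hratio _
    _ = θ ^ 2 * (muSigma R (fun v => ∑ u, p u * transM R u v) ^ 2 + 1) := by
        rw [hR.sq_muSigma_add_one (hp1 ▸ hR.sum_sum_mul_transM p)]
    _ ≤ θ ^ 4 * (muSigma R (fun v => ∑ u, p u * transM R u v) ^ 2 + 1) := by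
        gcongr
        norm_num

/-- **Lemma 15 (semirandom steps).**  Let `R` be a rate matrix with `d_R(u) ≥ d > 0` and
let `G` have maximum degree at most `θ - 1` with `d_G(u) = 0` whenever `d_R(u) ≥ θd`.
For a probability measure `π`, one step of `M` contracts `μ_σ` by a factor `λ(R)`;
a subsequent lazy `G`-step (any stochastic kernel supported on loops and edges of `G`)
satisfies `μ_σ(π'')² ≤ θ⁴ (μ_σ(π')² + 1)`. -/
theorem lemma_semirandom_step (n : ℕ) (R : Matrix (Fin n) (Fin n) ℝ)
    (hR : IsRateMatrix R)
    (d : ℝ) (hd : 0 < d) (hdlow : ∀ u, d ≤ rowSum R u)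
    (θ : ℝ) (hθ : 1 ≤ θ) (G : SimpleGraph (Fin n))
    (hmax : ∀ u, (deg G u : ℝ) ≤ θ - 1)
    (hheavy : ∀ u, θ * d ≤ rowSum R u → deg G u = 0)
    (p : Fin n → ℝ) (hp : ∀ v, 0 ≤ p v) (hp1 : (∑ v, p v) = 1)
    (K : Matrix (Fin n) (Fin n) ℝ) (hK0 : ∀ v u, 0 ≤ K v u)
    (hK1 : ∀ v, (∑ u, K v u) = 1)
    (hKG : ∀ v u, K v u ≠ 0 → u = v ∨ G.Adj u v) :
    muSigma R (fun v => ∑ u, p u * transM R u v) ≤ lam R * muSigma R p ∧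
    muSigma R (fun u => ∑ v, (∑ w, p w * transM R w v) * K v u) ^ 2 ≤
      θ ^ 4 * (muSigma R (fun v => ∑ u, p u * transM R u v) ^ 2 + 1) :=
  lemma_semirandom_step_general n R hR d hdlow θ hθ G hmax hheavy p hp1 K hK0 hK1 hKG
end

section
/- Let β ∈ (0,1] and let G be a graph on a vertex set V with |V| = n such that every A ⊆ V with |A| < βn satisfies |N_G(A)| ≥ 2|A|. Suppose s_2(G) < n and that G contains a path with s_2(G) edges. For U ⊆ V, let EP_2(U) denote the set of ordered pairs (x,y) such that some path in G with exactly s_2(G) edges has endpoints x and y and vertex set U. Then there exists U ⊆ V with |EP_2(U)| ≥ (βn)². -/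
namespace Paper

/-- `s_2(G)`: the maximum number of edges of a path or cycle contained in `G`. -/
noncomputable def sTwo {V : Type*} (G : SimpleGraph V) : ℕ :=
  sSup {m : ℕ | (∃ (u v : V) (w : G.Walk u v), w.IsPath ∧ w.length = m) ∨
    (∃ (u : V) (w : G.Walk u u), w.IsCycle ∧ w.length = m)}

/-- `EP₂(U)`: ordered pairs `(x,y)` of endpoints of longest paths of `G` (paths with
`s_2(G)` edges) with vertex set `U`. -/
def EP2 {V : Type*} [Fintype V] (G : SimpleGraph V) (U : Set V) : Set (V × V) :=
  {q | ∃ w : G.Walk q.1 q.2, w.IsPath ∧ w.length = sTwo G ∧ {v | v ∈ w.support} = U}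

end Paper

open Paper

/-!
Pósa rotations. Fix the start `a` of a longest path `P` and let `R` be the set of ends of the
paths obtained from `P` by rotations. A vertex outside `R` adjacent to `R` must be a
`P`-neighbour of a vertex of `R`, and the end of `P` has only one `P`-neighbour, so
`|N(R)| ≤ 2|R| - 1`; the expansion hypothesis then forces `|R| ≥ βn`. Reversing a rotated path
ending at `c ∈ R` and rotating again with `c` fixed gives at least `βn` ends `d` for each such
`c`, and every pair `(c, d)` is joined by a longest path on the vertex set of `P`.
-/

open Finset in
lemma Set.ncard_mul_le_ncard_of_le_ncard_fiber {α β : Type*} [Finite α] [Finite β]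
    {S : Set (α × β)} {A : Set α} {k : ℕ} (h : ∀ a ∈ A, k ≤ {b | (a, b) ∈ S}.ncard) :
    A.ncard * k ≤ S.ncard := by
  classical
  have := Fintype.ofFinite α
  have := Fintype.ofFinite β
  have hfiber : ∀ a ∈ A.toFinset, k ≤ #{x ∈ {x ∈ S.toFinset | x.1 ∈ A} | x.1 = a} := by
    intro a ha
    refine (h a (Set.mem_toFinset.1 ha)).trans ?_
    rw [← Set.ncard_image_of_injective _ (Prod.mk_right_injective a), ← Set.ncard_coe_finset]
    refine Set.ncard_le_ncard ?_
    rintro _ ⟨b, hb, rfl⟩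
    simpa [Set.mem_toFinset.1 ha] using hb
  calc A.ncard * k = k * #A.toFinset := by rw [Set.ncard_eq_toFinset_card', mul_comm]
    _ ≤ #{x ∈ S.toFinset | x.1 ∈ A} :=
      Finset.mul_card_image_le_card_of_maps_to (by simp) k hfiber
    _ ≤ S.ncard := by rw [Set.ncard_eq_toFinset_card']; exact Finset.card_filter_le _ _

lemma Set.ncard_biUnion_le_mul_ncard {α β : Type*} [Finite β] {S : Set α} (hS : S.Finite)
    {f : α → Set β} {k : ℕ} (hf : ∀ r ∈ S, (f r).ncard ≤ k) :
    (⋃ r ∈ S, f r).ncard ≤ k * S.ncard := by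
  induction S, hS using Set.Finite.induction_on with
  | empty => simp
  | @insert r S hr hS ih =>
    rw [Set.biUnion_insert, Set.ncard_insert_of_notMem hr hS, mul_add_one, add_comm]
    exact (Set.ncard_union_le _ _).trans (add_le_add (hf r (Set.mem_insert r S))
      (ih fun r' hr' => hf r' (Set.mem_insert_of_mem r hr')))

namespace SimpleGraph.Walk

variable {V : Type*} {G : SimpleGraph V} {a b v : V}

lemma IsPath.ncard_neighborSet_toSubgraph [DecidableEq V] {p : G.Walk a b} (hp : p.IsPath)
    (hv : v ∈ p.support) (hvb : v ≠ b) :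
    (p.toSubgraph.neighborSet v).ncard = if v = a then 1 else 2 := by
  obtain ⟨i, rfl, hi⟩ := mem_support_iff_exists_getVert.1 hv
  have hil : i < p.length := by
    refine lt_of_le_of_ne hi fun h => hvb ?_
    rw [h, getVert_length]
  rcases Nat.eq_zero_or_pos i with rfl | hi0
  · rw [getVert_zero, if_pos rfl, hp.neighborSet_toSubgraph_startpoint
      (not_nil_iff_lt_length.2 hil), Set.ncard_singleton]
  · have hva : p.getVert i ≠ a := fun h => by
      have := hp.getVert_injOn (by simp only [Set.mem_ofPred_eq]; omega)
        (by simp only [Set.mem_ofPred_eq]; omega) (h.trans p.getVert_zero.symm)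
      omega
    rw [if_neg hva, hp.ncard_neighborSet_toSubgraph_internal_eq_two hi0.ne' hil]

lemma IsPath.ncard_neighborSet_toSubgraph_end_le_one {p : G.Walk a b} (hp : p.IsPath) :
    (p.toSubgraph.neighborSet b).ncard ≤ 1 := by
  by_cases hnil : p.Nil
  · obtain rfl := hnil.eq
    rw [hnil.eq_nil]
    simp
  · rw [hp.neighborSet_toSubgraph_endpoint hnil, Set.ncard_singleton]

lemma IsPath.ncard_neighborSet_toSubgraph_le_two {p : G.Walk a b} (hp : p.IsPath) (v : V) :
    (p.toSubgraph.neighborSet v).ncard ≤ 2 := by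
  by_cases hv : v ∈ p.support
  · classical
    by_cases hvb : v = b
    · exact hvb ▸ hp.ncard_neighborSet_toSubgraph_end_le_one.trans one_le_two
    · rw [hp.ncard_neighborSet_toSubgraph hv hvb]
      split_ifs <;> norm_num
  · have : p.toSubgraph.neighborSet v = ∅ :=
      Set.eq_empty_of_forall_notMem fun w hw => hv (mem_support_of_adj_toSubgraph hw)
    simp [this]

lemma IsPath.ncard_biUnion_neighborSet_toSubgraph_add_one_le [Finite V] {p : G.Walk a b}
    (hp : p.IsPath) {S : Set V} (hb : b ∈ S) :
    (⋃ r ∈ S, p.toSubgraph.neighborSet r).ncard + 1 ≤ 2 * S.ncard := by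
  rw [← Set.insert_sdiff_self_of_mem hb, Set.biUnion_insert,
    Set.ncard_insert_of_notMem (fun h => h.2 rfl)]
  have := (Set.ncard_union_le _ _).trans (add_le_add hp.ncard_neighborSet_toSubgraph_end_le_one
    (Set.ncard_biUnion_le_mul_ncard (Set.toFinite (S \ {b})) fun r _ =>
      hp.ncard_neighborSet_toSubgraph_le_two r))
  omega

-- Rotating the path `a ⋯ u w ⋯ c` along an edge `uc` gives the path `a ⋯ u c ⋯ w`.
inductive IsPosaRotation (p : G.Walk a b) : {c : V} → G.Walk a c → Prop
  | refl : IsPosaRotation p p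
  | rotate {u w c : V} (r₁ : G.Walk a u) (huw : G.Adj u w) (r₂ : G.Walk w c) (huc : G.Adj u c) :
      IsPosaRotation p (r₁.append (cons huw r₂)) →
      IsPosaRotation p (r₁.append (cons huc r₂.reverse))

def posaEnds (p : G.Walk a b) : Set V :=
  {c | ∃ q : G.Walk a c, IsPosaRotation p q}

def IsLongestPath (p : G.Walk a b) : Prop :=
  p.IsPath ∧ ∀ ⦃x y : V⦄ (q : G.Walk x y), q.IsPath → q.length ≤ p.length

lemma end_mem_posaEnds (p : G.Walk a b) : b ∈ p.posaEnds := ⟨p, .refl⟩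

namespace IsPosaRotation

variable {p : G.Walk a b} {c : V} {q : G.Walk a c}

lemma end_mem_posaEnds (hq : IsPosaRotation p q) : c ∈ p.posaEnds := ⟨q, hq⟩

lemma support_perm (hq : IsPosaRotation p q) : q.support.Perm p.support := by
  induction hq with
  | refl => rfl
  | rotate r₁ huw r₂ huc _ ih =>
    refine List.Perm.trans ?_ ih
    simp only [support_append, support_cons, List.tail_cons, support_reverse]
    exact (List.reverse_perm _).append_left _

lemma length_eq (hq : IsPosaRotation p q) : q.length = p.length := by
  have := hq.support_perm.length_eq
  rwa [length_support, length_support, Nat.add_right_cancel_iff] at this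

-- A rotation destroys only the edge `uw`, and `w` becomes an end.
lemma mem_edges_or (hq : IsPosaRotation p q) {e : Sym2 V} (he : e ∈ p.edges) :
    e ∈ q.edges ∨ ∃ x ∈ e, x ∈ p.posaEnds := by
  induction hq with
  | refl => exact Or.inl he
  | rotate r₁ huw r₂ huc hq ih =>
    rcases ih with he | he
    · simp only [edges_append, edges_cons, List.mem_append, List.mem_cons] at he
      rcases he with he | rfl | he
      · simp [he]
      · exact Or.inr ⟨_, Sym2.mem_mk_right _ _, (rotate r₁ huw r₂ huc hq).end_mem_posaEnds⟩
      · simp [edges_reverse, he]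
    · exact Or.inr he

lemma exists_rotate (hq : IsPosaRotation p q) (hv : v ∈ q.support) (hvc : v ≠ c)
    (hadj : G.Adj v c) : ∃ w ∈ p.posaEnds, s(v, w) ∈ q.edges := by
  classical
  obtain ⟨w, huw, r₂, hr₂⟩ := not_nil_iff.1 fun h : (q.dropUntil v hv).Nil => hvc h.eq
  have hsplit : q = (q.takeUntil v hv).append (cons huw r₂) := hr₂ ▸ (q.take_spec hv).symm
  refine ⟨w, (rotate _ huw r₂ hadj (hsplit ▸ hq)).end_mem_posaEnds, ?_⟩
  rw [hsplit]
  simp [edges_append]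

end IsPosaRotation

namespace IsLongestPath

variable {p : G.Walk a b}

lemma reverse (hp : p.IsLongestPath) : p.reverse.IsLongestPath :=
  ⟨hp.1.reverse, fun _ _ q hq => (length_reverse p).symm ▸ hp.2 q hq⟩

lemma of_isPosaRotation (hp : p.IsLongestPath) {c : V} {q : G.Walk a c}
    (hq : IsPosaRotation p q) : q.IsLongestPath :=
  ⟨(isPath_def _).2 (hq.support_perm.nodup_iff.2 hp.1.support_nodup),
    fun _ _ r hr => hq.length_eq ▸ hp.2 r hr⟩

lemma mem_support_of_adj (hp : p.IsLongestPath) (h : G.Adj b v) : v ∈ p.support := by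
  by_contra hv
  have := hp.2 _ (hp.1.concat hv h)
  simp at this

lemma exists_adj_toSubgraph_of_mem_nbr (hp : p.IsLongestPath)
    (hv : v ∈ nbr G p.posaEnds) : ∃ r ∈ p.posaEnds, p.toSubgraph.Adj v r := by
  classical
  obtain ⟨hvR, c, ⟨q, hq⟩, hcv⟩ := hv
  have hq' := hp.of_isPosaRotation hq
  have hvq : v ∈ q.support := hq'.mem_support_of_adj hcv
  have hvc : v ≠ c := fun h => hvR (h ▸ hq.end_mem_posaEnds)
  have hvp : v ∈ p.support := hq.support_perm.subset hvq
  have hvb : v ≠ b := fun h => hvR (h ▸ p.end_mem_posaEnds)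
  obtain ⟨w, hwR, hw⟩ := hq.exists_rotate hvq hvc hcv.symm
  -- Otherwise `q` keeps every `p`-edge at `v`, and `v` has as many neighbours on `q` as on `p`,
  -- so the neighbour `w` that rotating `q` at `v` turns into an end is a `p`-neighbour.
  by_contra! hnone
  have hsub : p.toSubgraph.neighborSet v ⊆ q.toSubgraph.neighborSet v := by
    intro x hx
    rw [Subgraph.mem_neighborSet, adj_toSubgraph_iff_mem_edges] at hx ⊢
    rcases hq.mem_edges_or hx with h | ⟨y, hy, hyR⟩
    · exact h
    · rcases Sym2.mem_iff.1 hy with rfl | rfl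
      · exact absurd hyR hvR
      · exact absurd (adj_toSubgraph_iff_mem_edges.2 hx) (hnone y hyR)
  have heq : p.toSubgraph.neighborSet v = q.toSubgraph.neighborSet v :=
    Set.eq_of_subset_of_ncard_le hsub (by
      rw [hp.1.ncard_neighborSet_toSubgraph hvp hvb, hq'.1.ncard_neighborSet_toSubgraph hvq hvc])
      (finite_neighborSet_toSubgraph q)
  exact hnone w hwR (heq ▸ adj_toSubgraph_iff_mem_edges.2 hw : w ∈ p.toSubgraph.neighborSet v)

lemma ncard_nbr_posaEnds_add_one_le [Finite V] (hp : p.IsLongestPath) :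
    (nbr G p.posaEnds).ncard + 1 ≤ 2 * p.posaEnds.ncard := by
  refine le_trans (Nat.add_le_add_right (Set.ncard_le_ncard fun v hv => ?_) 1)
    (hp.1.ncard_biUnion_neighborSet_toSubgraph_add_one_le p.end_mem_posaEnds)
  obtain ⟨r, hr, hvr⟩ := hp.exists_adj_toSubgraph_of_mem_nbr hv
  exact Set.mem_biUnion hr hvr.symm

lemma le_ncard_posaEnds [Finite V] (hp : p.IsLongestPath) {k : ℕ}
    (hexp : ∀ A : Set V, A.ncard < k → 2 * A.ncard ≤ (nbr G A).ncard) :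
    k ≤ p.posaEnds.ncard := by
  by_contra! hk
  have := hexp _ hk
  have := hp.ncard_nbr_posaEnds_add_one_le
  omega

end IsLongestPath

end SimpleGraph.Walk

namespace Paper

lemma length_le_sTwo {V : Type*} [Finite V] {G : SimpleGraph V} {x y : V} {p : G.Walk x y}
    (hp : p.IsPath) : p.length ≤ sTwo G := by
  classical
  have := Fintype.ofFinite G.edgeSet
  refine le_csSup ⟨G.edgeFinset.card, ?_⟩ (Or.inl ⟨x, y, p, hp, rfl⟩)
  rintro m (⟨u, v, w, hw, rfl⟩ | ⟨u, w, hw, rfl⟩)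
  · exact hw.isTrail.length_le_card_edgeFinset
  · exact hw.isTrail.length_le_card_edgeFinset

end Paper

theorem lemma_EP2_general (V : Type*) [Fintype V] (G : SimpleGraph V) (β : ℝ)
    (hβ : 0 < β)
    (hexp : ∀ A : Set V, (A.ncard : ℝ) < β * Fintype.card V →
      2 * A.ncard ≤ (nbr G A).ncard)
    (hpath : ∃ (x y : V) (w : G.Walk x y), w.IsPath ∧ w.length = sTwo G) :
    ∃ U : Set V, (β * Fintype.card V) ^ 2 ≤ ((EP2 G U).ncard : ℝ) := by
  obtain ⟨a, b, p, hp, hlen⟩ := hpath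
  have hlong : p.IsLongestPath := ⟨hp, fun _ _ q hq => hlen ▸ length_le_sTwo hq⟩
  set k := ⌈β * Fintype.card V⌉₊
  have hexp_nat (A : Set V) (hA : A.ncard < k) : 2 * A.ncard ≤ (nbr G A).ncard :=
    hexp A (Nat.lt_ceil.1 hA)
  have hfiber : ∀ c ∈ p.posaEnds, k ≤ {d | (c, d) ∈ EP2 G {v | v ∈ p.support}}.ncard := by
    rintro c ⟨q, hq⟩
    have hq' := (hlong.of_isPosaRotation hq).reverse
    refine (hq'.le_ncard_posaEnds hexp_nat).trans (Set.ncard_le_ncard fun d ⟨r, hr⟩ => ?_)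
    refine ⟨r, (hq'.of_isPosaRotation hr).1, ?_, ?_⟩
    · rw [hr.length_eq, SimpleGraph.Walk.length_reverse, hq.length_eq, hlen]
    · ext v
      simp [hr.support_perm.mem_iff, hq.support_perm.mem_iff]
  refine ⟨{v | v ∈ p.support}, ?_⟩
  calc (β * (Fintype.card V : ℝ)) ^ 2 ≤ (k : ℝ) ^ 2 := by gcongr; exact Nat.le_ceil _
    _ ≤ ((p.posaEnds.ncard * k : ℕ) : ℝ) := by
      rw [sq]; exact_mod_cast Nat.mul_le_mul_right k (hlong.le_ncard_posaEnds hexp_nat)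
    _ ≤ ((EP2 G {v | v ∈ p.support}).ncard : ℝ) := by
      exact_mod_cast Set.ncard_mul_le_ncard_of_le_ncard_fiber hfiber

/-- **Lemma 19 (many endpoint pairs).**  If `G` is a `2`-fold expander
(`|N_G(A)| ≥ 2|A|` for all `|A| < βn`) with `s_2(G) < n`, realised by a path, then some
vertex set `U` has `|EP₂(U)| ≥ (βn)²`. -/
theorem lemma_EP2 (V : Type*) [Fintype V] (G : SimpleGraph V) (β : ℝ)
    (hβ : 0 < β) (hβ1 : β ≤ 1)
    (hexp : ∀ A : Set V, (A.ncard : ℝ) < β * Fintype.card V →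
      2 * A.ncard ≤ (nbr G A).ncard)
    (hs : sTwo G < Fintype.card V)
    (hpath : ∃ (x y : V) (w : G.Walk x y), w.IsPath ∧ w.length = sTwo G) :
    ∃ U : Set V, (β * Fintype.card V) ^ 2 ≤ ((EP2 G U).ncard : ℝ) :=
  lemma_EP2_general V G β hβ hexp hpath
end
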